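/- For a complete first-order theory T the following are equivalent: (i) T does not have SOP₁; (ii) T does not have SOP₁'; (iii) rk¹_φ({x̄=x̄},{ȳ=ȳ}) is finite for every formula φ(x̄,ȳ). -/

import Mathlib

open FirstOrder FirstOrder.Language

namespace SopPaper

variable {L : FirstOrder.Language.{0, 0}}

/-- A first-order formula with parameters from `M`, in free variables indexed by `Fin m`. -/
structure ParamFormula (L : FirstOrder.Language.{0, 0}) (M : Type*) [L.Structure M] (m : ℕ) where
  k : ℕ
  toFormula : L.Formula (Fin m ⊕ Fin k)
  par : Fin k → M

variable {M : Type*} [L.Structure M]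

/-- Realization of a formula with parameters at a tuple `e`. -/
def ParamFormula.Realize {m : ℕ} (ψ : ParamFormula L M m) (e : Fin m → M) : Prop :=
  ψ.toFormula.Realize (Sum.elim e ψ.par)

/-- A tuple `e` realizes the partial type `p`. -/
def Realizes {m : ℕ} (p : Set (ParamFormula L M m)) (e : Fin m → M) : Prop :=
  ∀ ψ ∈ p, ψ.Realize e

/-- A partial type (over the monster model) is consistent iff it is realized. -/
def Consistent {m : ℕ} (p : Set (ParamFormula L M m)) : Prop :=
  ∃ e, Realizes p e

/-- The restriction `ρ ↾ k` of an infinite branch `ρ ∈ 2^ω` to a finite sequence. -/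
def restrict (ρ : ℕ → Bool) (k : ℕ) : List Bool :=
  List.ofFn fun i : Fin k => ρ i

/-- `φ(x̄, ȳ)` exemplifies SOP₁ in the structure `M` (thought of as the monster model):
there is a tree of parameters `⟨ā_η : η ∈ 2^{<ω}⟩` such that every branch is consistent,
and `{φ(x̄, ā_η), φ(x̄, ā_{ν⌢⟨1⟩})}` is inconsistent whenever `ν⌢⟨0⟩ ⊴ η`. -/
def ExemplifiesSOP1 {mx my : ℕ} (φ : L.Formula (Fin mx ⊕ Fin my)) (M : Type*)
    [L.Structure M] : Prop :=
  ∃ a : List Bool → Fin my → M,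
    (∀ ρ : ℕ → Bool, ∃ e : Fin mx → M, ∀ k : ℕ,
        φ.Realize (Sum.elim e (a (restrict ρ k)))) ∧
    ∀ ν η : List Bool, (ν ++ [false]) <+: η →
      ¬ ∃ e : Fin mx → M,
          φ.Realize (Sum.elim e (a η)) ∧ φ.Realize (Sum.elim e (a (ν ++ [true])))

/-- `φ(x̄, ȳ)` exemplifies SOP₁' in the structure `M`:  there is a tree of parameters
`⟨ā_η : η ∈ 2^{<ω}⟩` such that for every branch `ρ ∈ 2^ω` the signed set
`{φ(x̄, ā_{ρ↾n})^{ρ(n)} : n < ω}` is consistent, and `{φ(x̄, ā_η), φ(x̄, ā_ν)}` is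
inconsistent whenever `ν⌢⟨0⟩ ⊴ η`. -/
def ExemplifiesSOP1' {mx my : ℕ} (φ : L.Formula (Fin mx ⊕ Fin my)) (M : Type*)
    [L.Structure M] : Prop :=
  ∃ a : List Bool → Fin my → M,
    (∀ ρ : ℕ → Bool, ∃ e : Fin mx → M, ∀ k : ℕ,
        (φ.Realize (Sum.elim e (a (restrict ρ k))) ↔ ρ k = true)) ∧
    ∀ ν η : List Bool, (ν ++ [false]) <+: η →
      ¬ ∃ e : Fin mx → M,
          φ.Realize (Sum.elim e (a η)) ∧ φ.Realize (Sum.elim e (a ν))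

/-- The formula `¬ (∃ x̄)(φ(x̄, ȳ) ∧ φ(x̄, z̄))` in the variables `ȳ ⊕ z̄`. -/
def incompatFormula {mx my : ℕ} (φ : L.Formula (Fin mx ⊕ Fin my)) :
    L.Formula (Fin my ⊕ Fin my) :=
  (((BoundedFormula.relabel
        (Sum.elim (fun i => Sum.inr i) fun j => Sum.inl (Sum.inl j)) φ) ⊓
      (BoundedFormula.relabel
        (Sum.elim (fun i => Sum.inr i) fun j => Sum.inl (Sum.inr j)) φ)).exs).not

/-- `rk¹_φ(p, q) ≥ n`. -/
def RankGE {mx my : ℕ} (φ : L.Formula (Fin mx ⊕ Fin my)) :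
    ℕ → Set (ParamFormula L M mx) → Set (ParamFormula L M my) → Prop
  | 0, p, q => Consistent p ∧ Consistent q
  | n + 1, p, q =>
      ∃ c : Fin my → M, Realizes q c ∧
        RankGE φ n (insert ⟨my, φ, c⟩ p) q ∧
        RankGE φ n p (insert ⟨my, incompatFormula φ, c⟩ q)

/-- `a` is a `φ`-SOP₁' tree for `p(x̄)` and `q(ȳ)` of depth `n`. -/
def IsSOP1'Tree {mx my : ℕ} (φ : L.Formula (Fin mx ⊕ Fin my))
    (p : Set (ParamFormula L M mx)) (q : Set (ParamFormula L M my))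
    (n : ℕ) (a : List Bool → Fin my → M) : Prop :=
  (∀ η : List Bool, η.length = n → ∃ e : Fin mx → M, Realizes p e ∧
      ∀ ℓ : ℕ, ℓ < n →
        (φ.Realize (Sum.elim e (a (η.take ℓ))) ↔ η.getD ℓ false = true)) ∧
  (∀ η : List Bool, η.length ≤ n → Realizes q (a η)) ∧
  (∀ ν η : List Bool, η.length ≤ n → (ν ++ [false]) <+: η →
      ¬ ∃ e : Fin mx → M,
          φ.Realize (Sum.elim e (a η)) ∧ φ.Realize (Sum.elim e (a ν)))

/-- `φ(x̄, ȳ)` exemplifies SOP₂ in the structure `M`. -/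
def ExemplifiesSOP2 {mx my : ℕ} (φ : L.Formula (Fin mx ⊕ Fin my)) (M : Type*)
    [L.Structure M] : Prop :=
  ∃ a : List Bool → Fin my → M,
    (∀ ρ : ℕ → Bool, ∃ e : Fin mx → M, ∀ k : ℕ,
        φ.Realize (Sum.elim e (a (restrict ρ k)))) ∧
    ∀ η ν : List Bool, ¬ η <+: ν → ¬ ν <+: η →
      ¬ ∃ e : Fin mx → M,
          φ.Realize (Sum.elim e (a η)) ∧ φ.Realize (Sum.elim e (a ν))

/-!
The nodes `a_{η⌢⟨1⟩}` of an SOP₁ tree form an SOP₁' tree. Conversely, re-indexing an SOP₁' tree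
along the encoding `1 ↦ 1`, `0 ↦ 10` gives an SOP₁ tree: on an encoded branch every encoded node
is followed by a `1`, and `ν⌢⟨0⟩ ⊴ η` becomes `code(ν⌢⟨1⟩)⌢⟨0⟩ ⊴ code(η)`.

`rk¹_φ(p, q) ≥ n` holds iff there is a tree of parameters of depth `n` whose nodes realize `q`,
with `{φ(x̄, c_η), φ(x̄, c_ν)}` inconsistent for `ν⌢⟨0⟩ ⊴ η`, and whose leaves have branches
consistent with `p` and the `φ(x̄, c_ν)` for `ν⌢⟨1⟩` on them: the two conditions in the definition
of the rank are the two subtrees of the root. Such a tree involves finitely many parameters, so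
its existence is a sentence and transfers between models of `T`; in particular an SOP₁' tree in
any model gives infinite rank. Conversely, in a tree of depth `n + 1` the witness of the branch
`η⌢⟨1⟩` satisfies `φ(x̄, c_η)`, hence `¬φ(x̄, c_ν)` whenever `ν⌢⟨0⟩ ⊴ η`; so infinite rank
gives SOP₁' trees of every finite depth, and compactness glues them into one.
-/

lemma restrict_length (ρ : ℕ → Bool) (k : ℕ) : (restrict ρ k).length = k := by
  simp [restrict]

lemma restrict_succ (ρ : ℕ → Bool) (k : ℕ) : restrict ρ (k + 1) = restrict ρ k ++ [ρ k] := by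
  rw [restrict, List.ofFn_succ', List.concat_eq_append]
  rfl

lemma restrict_prefix_restrict (ρ : ℕ → Bool) {k m : ℕ} (h : k ≤ m) :
    restrict ρ k <+: restrict ρ m := by
  induction m, h using Nat.le_induction with
  | base => exact List.prefix_refl _
  | succ m _ ih => exact ih.trans (restrict_succ ρ m ▸ List.prefix_append _ _)

lemma restrict_getD_of_prefix {ν η : List Bool} (h : ν <+: η) :
    restrict (η.getD · false) ν.length = ν := by
  refine List.ext_getElem (restrict_length _ _) fun i hi _ => ?_
  rw [restrict_length] at hi
  simp [restrict, ← h.getElem hi, List.getElem?_eq_getElem (hi.trans_le h.length_le)]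

lemma restrict_getD_of_append_prefix {ν η : List Bool} {b : Bool} (h : ν ++ [b] <+: η) :
    restrict (η.getD · false) ν.length = ν ∧ η.getD ν.length false = b := by
  have := restrict_getD_of_prefix h
  rw [List.length_append, List.length_singleton, restrict_succ] at this
  simpa using this

lemma forall_append_singleton_prefix_cons {α : Type*} {P : List α → Prop} {a b : α}
    {η : List α} :
    (∀ ν, ν ++ [a] <+: b :: η → P ν) ↔ (a = b → P []) ∧ ∀ ν, ν ++ [a] <+: η → P (b :: ν) := by
  refine ⟨fun h => ⟨fun hab => h [] (by simp [hab]), fun ν hν => h (b :: ν) (by simpa)⟩,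
    fun ⟨h₀, h₁⟩ ν hν => ?_⟩
  rcases ν with _ | ⟨b', ν⟩
  · exact h₀ (by simpa using hν)
  · rw [List.cons_append, List.cons_prefix_cons] at hν
    obtain ⟨rfl, hν⟩ := hν
    exact h₁ ν hν

lemma getD_eq_of_prefix {η ν : List Bool} (h : η <+: ν) {i : ℕ} (hi : i < η.length) (d : Bool) :
    ν.getD i d = η.getD i d := by
  simp [List.getElem?_eq_getElem hi, List.getElem?_eq_getElem (hi.trans_le h.length_le),
    h.getElem hi]

lemma realize_incompatFormula {mx my : ℕ} {φ : L.Formula (Fin mx ⊕ Fin my)}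
    {c d : Fin my → M} :
    (incompatFormula φ).Realize (Sum.elim c d) ↔
      ¬ ∃ e : Fin mx → M, φ.Realize (Sum.elim e c) ∧ φ.Realize (Sum.elim e d) := by
  simp only [incompatFormula, Formula.realize_not, BoundedFormula.realize_exs,
    BoundedFormula.realize_inf, BoundedFormula.realize_relabel]
  refine not_congr (exists_congr fun xs => and_congr ?_ ?_) <;>
  · rw [Formula.Realize, Subsingleton.elim (xs ∘ Fin.natAdd mx) default, Fin.castAdd_zero]
    congr! 1
    ext (i | j) <;> rfl

lemma realizes_insert {m : ℕ} {p : Set (ParamFormula L M m)} {ψ : ParamFormula L M m}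
    {e : Fin m → M} : Realizes (insert ψ p) e ↔ ψ.Realize e ∧ Realizes p e := by
  simp [Realizes]

lemma realizes_empty {m : ℕ} (e : Fin m → M) : Realizes (∅ : Set (ParamFormula L M m)) e :=
  fun _ h => h.elim

section RankTree

variable {mx my : ℕ} (φ : L.Formula (Fin mx ⊕ Fin my))

/-- `c` witnesses `rk¹_φ(p, q) ≥ n`: an SOP₁' tree of depth `n` whose branches only have to satisfy
the positive instances `φ(x̄, c_ν)`, `ν⌢⟨1⟩ ⊴ η`. -/
def IsRankTree (p : Set (ParamFormula L M mx)) (q : Set (ParamFormula L M my)) (n : ℕ)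
    (c : List Bool → Fin my → M) : Prop :=
  (∀ η : List Bool, η.length = n → ∃ e : Fin mx → M, Realizes p e ∧
      ∀ ν, ν ++ [true] <+: η → φ.Realize (Sum.elim e (c ν))) ∧
  (∀ η : List Bool, η.length ≤ n → Realizes q (c η)) ∧
  (∀ ν η : List Bool, η.length ≤ n → ν ++ [false] <+: η →
      ¬ ∃ e : Fin mx → M, φ.Realize (Sum.elim e (c η)) ∧ φ.Realize (Sum.elim e (c ν)))

variable {φ} {p : Set (ParamFormula L M mx)} {q : Set (ParamFormula L M my)} {n : ℕ}
  {c : List Bool → Fin my → M}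

lemma isRankTree_zero_iff : IsRankTree φ p q 0 c ↔ Consistent p ∧ Realizes q (c []) := by
  simp [IsRankTree, Consistent]

lemma IsRankTree.left (h : IsRankTree φ p q (n + 1) c) :
    IsRankTree φ (insert ⟨my, φ, c []⟩ p) q n (c ∘ List.cons true) := by
  obtain ⟨hleaf, hnode, hinc⟩ := h
  refine ⟨fun η hη => ?_, fun η hη => hnode _ (by simpa), fun ν η hη hνη =>
    hinc (true :: ν) (true :: η) (by simpa) (by simpa)⟩
  obtain ⟨e, he, hbranch⟩ := hleaf (true :: η) (by simpa)
  rw [forall_append_singleton_prefix_cons] at hbranch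
  exact ⟨e, realizes_insert.mpr ⟨hbranch.1 rfl, he⟩, hbranch.2⟩

lemma IsRankTree.right (h : IsRankTree φ p q (n + 1) c) :
    IsRankTree φ p (insert ⟨my, incompatFormula φ, c []⟩ q) n (c ∘ List.cons false) := by
  obtain ⟨hleaf, hnode, hinc⟩ := h
  refine ⟨fun η hη => ?_, fun η hη => ?_, fun ν η hη hνη =>
    hinc (false :: ν) (false :: η) (by simpa) (by simpa)⟩
  · obtain ⟨e, he, hbranch⟩ := hleaf (false :: η) (by simpa)
    exact ⟨e, he, (forall_append_singleton_prefix_cons.mp hbranch).2⟩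
  · refine realizes_insert.mpr ⟨?_, hnode _ (by simpa)⟩
    exact realize_incompatFormula.mpr (hinc [] (false :: η) (by simpa) (by simp))

lemma IsRankTree.of_subtrees (hroot : Realizes q (c []))
    (hleft : IsRankTree φ (insert ⟨my, φ, c []⟩ p) q n (c ∘ List.cons true))
    (hright : IsRankTree φ p (insert ⟨my, incompatFormula φ, c []⟩ q) n (c ∘ List.cons false)) :
    IsRankTree φ p q (n + 1) c := by
  refine ⟨?_, ?_, ?_⟩
  · rintro (_ | ⟨_ | _, η⟩) hη
    · simp at hη
    · obtain ⟨e, he, hbranch⟩ := hright.1 η (by simpa using hη)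
      exact ⟨e, he, forall_append_singleton_prefix_cons.mpr ⟨by simp, hbranch⟩⟩
    · obtain ⟨e, he, hbranch⟩ := hleft.1 η (by simpa using hη)
      obtain ⟨hroot, he⟩ := realizes_insert.mp he
      exact ⟨e, he, forall_append_singleton_prefix_cons.mpr ⟨fun _ => hroot, hbranch⟩⟩
  · rintro (_ | ⟨_ | _, η⟩) hη
    · exact hroot
    · exact (realizes_insert.mp (hright.2.1 η (by simpa using hη))).2
    · exact hleft.2.1 η (by simpa using hη)
  · rintro ν (_ | ⟨b, η⟩) hη
    · simp
    · revert ν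
      refine forall_append_singleton_prefix_cons.mpr ⟨?_, ?_⟩
      · rintro rfl
        exact realize_incompatFormula.mp (realizes_insert.mp (hright.2.1 η (by simpa using hη))).1
      · cases b
        exacts [fun ν => hright.2.2 ν η (by simpa using hη),
          fun ν => hleft.2.2 ν η (by simpa using hη)]

lemma isRankTree_succ_iff :
    IsRankTree φ p q (n + 1) c ↔ Realizes q (c []) ∧
      IsRankTree φ (insert ⟨my, φ, c []⟩ p) q n (c ∘ List.cons true) ∧
      IsRankTree φ p (insert ⟨my, incompatFormula φ, c []⟩ q) n (c ∘ List.cons false) :=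
  ⟨fun h => ⟨h.2.1 [] (by simp), h.left, h.right⟩, fun ⟨h, hl, hr⟩ => .of_subtrees h hl hr⟩

lemma rankGE_iff_exists_isRankTree : RankGE φ n p q ↔ ∃ c, IsRankTree φ p q n c := by
  induction n generalizing p q with
  | zero =>
    simp only [RankGE, isRankTree_zero_iff]
    exact ⟨fun ⟨hp, d, hd⟩ => ⟨fun _ => d, hp, hd⟩, fun ⟨c, hp, hc⟩ => ⟨hp, c [], hc⟩⟩
  | succ n ih =>
    simp only [RankGE, ih, isRankTree_succ_iff]
    constructor
    · rintro ⟨c₀, hc₀, ⟨cl, hl⟩, ⟨cr, hr⟩⟩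
      exact ⟨fun | [] => c₀ | true :: η => cl η | false :: η => cr η, hc₀, hl, hr⟩
    · rintro ⟨c, hc, hl, hr⟩
      exact ⟨c [], hc, ⟨_, hl⟩, ⟨_, hr⟩⟩

lemma IsRankTree.exists_signed_branch (h : IsRankTree φ p q (n + 1) c) {η : List Bool}
    (hη : η.length = n) :
    ∃ e : Fin mx → M, Realizes p e ∧
      ∀ ν b, ν ++ [b] <+: η → (φ.Realize (Sum.elim e (c ν)) ↔ b = true) := by
  obtain ⟨e, he, hpos⟩ := h.1 (η ++ [true]) (by simp [hη])
  refine ⟨e, he, fun ν b hνη => ?_⟩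
  cases b
  · refine iff_of_false (fun hν => h.2.2 ν η (by omega) hνη ⟨e, ?_, hν⟩) Bool.false_ne_true
    exact hpos η (List.prefix_refl _)
  · exact iff_of_true (hpos ν (hνη.trans (List.prefix_append _ _))) rfl

end RankTree

section Encoding

def encodeBit (b : Bool) : List Bool := if b then [true] else [true, false]

def encode (η : List Bool) : List Bool := η.flatMap encodeBit

@[simp]
lemma encode_append (η ν : List Bool) : encode (η ++ ν) = encode η ++ encode ν := by
  simp [encode]

@[simp]
lemma encode_singleton (b : Bool) : encode [b] = encodeBit b := by
  simp [encode]

lemma encode_prefix_encode {η ν : List Bool} (h : η <+: ν) : encode η <+: encode ν := by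
  obtain ⟨t, rfl⟩ := h
  simp

lemma length_le_length_encode (η : List Bool) : η.length ≤ (encode η).length := by
  induction η with
  | nil => simp
  | cons b η ih =>
    rw [← List.singleton_append, encode_append, List.length_append, List.length_append]
    cases b <;> simp [encodeBit] <;> omega

lemma encode_append_true_prefix_encode_succ (ρ : ℕ → Bool) (k : ℕ) :
    encode (restrict ρ k) ++ [true] <+: encode (restrict ρ (k + 1)) := by
  rw [restrict_succ, encode_append, encode_singleton]
  cases ρ k <;> simp [encodeBit]

/-- The infinite word `encode ρ`: its `n`-th letter already occurs in `encode (ρ ↾ (n + 1))`,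
which has length `> n`. -/
def encodeBranch (ρ : ℕ → Bool) (n : ℕ) : Bool := (encode (restrict ρ (n + 1))).getD n true

lemma restrict_encodeBranch_of_prefix {ρ : ℕ → Bool} {η : List Bool} {k : ℕ}
    (h : η <+: encode (restrict ρ k)) : restrict (encodeBranch ρ) η.length = η := by
  refine List.ext_getElem (restrict_length _ _) fun i hi _ => ?_
  rw [restrict_length] at hi
  have hle : i < (encode (restrict ρ (i + 1))).length :=
    (restrict_length ρ (i + 1) ▸ length_le_length_encode _).trans_lt' (by omega)
  have hη : η <+: encode (restrict ρ (max k (i + 1))) :=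
    h.trans (encode_prefix_encode (restrict_prefix_restrict ρ (le_max_left _ _)))
  have hρ : encode (restrict ρ (i + 1)) <+: encode (restrict ρ (max k (i + 1))) :=
    encode_prefix_encode (restrict_prefix_restrict ρ (le_max_right _ _))
  simp only [restrict, List.getElem_ofFn]
  rw [encodeBranch, ← getD_eq_of_prefix hρ hle, getD_eq_of_prefix hη hi, List.getD_eq_getElem]

end Encoding

section SOP1

variable {mx my : ℕ} {φ : L.Formula (Fin mx ⊕ Fin my)}

lemma encodeBranch_spec (ρ : ℕ → Bool) (k : ℕ) :
    restrict (encodeBranch ρ) (encode (restrict ρ k)).length = encode (restrict ρ k) ∧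
      encodeBranch ρ (encode (restrict ρ k)).length = true := by
  have h := restrict_encodeBranch_of_prefix (encode_append_true_prefix_encode_succ ρ k)
  rw [List.length_append, List.length_singleton, restrict_succ] at h
  simpa using h

lemma ExemplifiesSOP1'.exemplifiesSOP1 (h : ExemplifiesSOP1' φ M) : ExemplifiesSOP1 φ M := by
  obtain ⟨a, hbranch, hinc⟩ := h
  refine ⟨a ∘ encode, fun ρ => ?_, fun ν η hνη => ?_⟩
  · obtain ⟨e, he⟩ := hbranch (encodeBranch ρ)
    refine ⟨e, fun k => ?_⟩
    obtain ⟨hrestrict, htrue⟩ := encodeBranch_spec ρ k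
    simpa [hrestrict] using (he (encode (restrict ρ k)).length).mpr htrue
  · have key : encode ν ++ [true] ++ [false] <+: encode η := by
      simpa [encodeBit] using encode_prefix_encode hνη
    simpa [encodeBit] using hinc _ _ key

lemma ExemplifiesSOP1.exemplifiesSOP1' (h : ExemplifiesSOP1 φ M) : ExemplifiesSOP1' φ M := by
  obtain ⟨a, hbranch, hinc⟩ := h
  refine ⟨fun η => a (η ++ [true]), fun ρ => ?_, fun ν η hνη =>
    hinc ν (η ++ [true]) (hνη.trans (List.prefix_append _ _))⟩
  obtain ⟨e, he⟩ := hbranch ρ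
  refine ⟨e, fun k => ?_⟩
  cases hk : ρ k
  · refine iff_of_false (fun hpos => hinc (restrict ρ k) (restrict ρ (k + 1)) ?_ ⟨e, he _, hpos⟩)
      Bool.false_ne_true
    rw [restrict_succ, hk]
  · simpa [← hk, ← restrict_succ] using he (k + 1)

lemma exemplifiesSOP1_iff_exemplifiesSOP1' : ExemplifiesSOP1 φ M ↔ ExemplifiesSOP1' φ M :=
  ⟨ExemplifiesSOP1.exemplifiesSOP1', ExemplifiesSOP1'.exemplifiesSOP1⟩

end SOP1

lemma exists_realize_of_model_completeTheory {N : Type*} [L.Structure N]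
    [N ⊨ L.completeTheory M] {α : Type*} [Finite α] {ψ : L.Formula α} {v : α → N}
    (h : ψ.Realize v) : ∃ w : α → M, ψ.Realize w := by
  have hσ : N ⊨ ((ψ.relabel Sum.inr : L.Formula (Empty ⊕ α)).iExs α : L.Sentence) := by
    simpa [Sentence.Realize, Formula.realize_relabel] using ⟨v, h⟩
  simpa [Sentence.Realize, Formula.realize_relabel] using
    (realize_iff_of_model_completeTheory M N _).mp hσ

lemma exists_model_completeTheory_realize {α : Type} {Φ : ℕ → Set (L.Formula α)} (hΦ : Monotone Φ)
    (𝔠 : Type) [L.Structure 𝔠] [Nonempty 𝔠] (h : ∀ n, ∃ v : α → 𝔠, ∀ ψ ∈ Φ n, ψ.Realize v) :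
    ∃ (N : Theory.ModelType.{0, 0, 0} (L.completeTheory 𝔠)) (v : α → N),
      ∀ n, ∀ ψ ∈ Φ n, ψ.Realize v := by
  set T : ℕ → L[[α]].Theory := fun n =>
    (L.lhomWithConstants α).onTheory (L.completeTheory 𝔠) ∪ Formula.equivSentence '' Φ n
  have hT : Monotone T := fun m n hmn => Set.union_subset_union_right _ (Set.image_mono (hΦ hmn))
  have hsat : Theory.IsSatisfiable (⋃ n, T n) := by
    refine (Theory.isSatisfiable_directed_union_iff hT.directed_le).mpr fun n => ?_
    obtain ⟨v, hv⟩ := h n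
    let := constantsOn.structure v
    have : 𝔠 ⊨ T n := by
      refine Theory.model_union_iff.mpr ⟨(LHom.onTheory_model _ _).mpr inferInstance, ?_⟩
      simp only [Theory.model_iff, Set.forall_mem_image, Formula.realize_equivSentence]
      exact hv
    exact Theory.Model.isSatisfiable 𝔠
  obtain ⟨N⟩ := hsat
  let : L.Structure N := (L.lhomWithConstants α).reduct N
  have := LHom.isExpansionOn_reduct (L.lhomWithConstants α) N
  have : (N : Type) ⊨ L.completeTheory 𝔠 := (LHom.onTheory_model _ _).mp
    (N.is_model.mono (Set.subset_union_left.trans (Set.subset_iUnion T 0)))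
  refine ⟨⟨N⟩, fun a => (L.con a : N), fun n ψ hψ => ?_⟩
  have := N.is_model.realize_of_mem (Formula.equivSentence ψ)
    (Set.mem_iUnion_of_mem n (Or.inr ⟨ψ, hψ, rfl⟩))
  exact (Formula.realize_equivSentence N ψ).mp this

section TreeFormula

abbrev TreeNode (n : ℕ) : Type := {η : List Bool // η.length ≤ n}

instance (n : ℕ) : Finite (TreeNode n) := (List.finite_length_le Bool n).to_subtype

def TreeNode.ofList {n : ℕ} (η : List Bool) : TreeNode n :=
  ⟨η.take n, List.length_take_le _ _⟩

lemma TreeNode.ofList_of_length_le {n : ℕ} {η : List Bool} (h : η.length ≤ n) :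
    (TreeNode.ofList η : TreeNode n) = ⟨η, h⟩ :=
  Subtype.ext (List.take_of_length_le h :)

variable {mx my : ℕ} (φ : L.Formula (Fin mx ⊕ Fin my))

/-- The conditions of `IsRankTree φ ∅ ∅ n`, in the variables `(η, j)` for the node `c_η` and
`(η, i)` for a witness of the branch through `η`. -/
noncomputable def treeFormula (n : ℕ) : L.Formula (TreeNode n × Fin my ⊕ TreeNode n × Fin mx) :=
  (Formula.iInf fun p : {p : TreeNode n × TreeNode n // p.1.1 ++ [true] <+: p.2.1} =>
      φ.relabel (Sum.elim (fun i => Sum.inr (p.1.2, i)) (fun j => Sum.inl (p.1.1, j)))) ⊓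
    Formula.iInf fun p : {p : TreeNode n × TreeNode n // p.1.1 ++ [false] <+: p.2.1} =>
      (incompatFormula φ).relabel
        (Sum.elim (fun j => Sum.inl (p.1.2, j)) (fun j => Sum.inl (p.1.1, j)))

variable {φ}

lemma realize_treeFormula {n : ℕ} {v : TreeNode n × Fin my ⊕ TreeNode n × Fin mx → M} :
    (treeFormula φ n).Realize v ↔
      (∀ ν η : TreeNode n, ν.1 ++ [true] <+: η.1 →
        φ.Realize (Sum.elim (fun i => v (.inr (η, i))) (fun j => v (.inl (ν, j))))) ∧
      ∀ ν η : TreeNode n, ν.1 ++ [false] <+: η.1 → ¬ ∃ e : Fin mx → M,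
        φ.Realize (Sum.elim e (fun j => v (.inl (η, j)))) ∧
          φ.Realize (Sum.elim e (fun j => v (.inl (ν, j)))) := by
  simp only [treeFormula, Formula.realize_inf, Formula.realize_iInf, Formula.realize_relabel,
    Sum.comp_elim, realize_incompatFormula, Subtype.forall, Prod.forall]
  rfl

end TreeFormula

section Transfer

variable {mx my : ℕ} {φ : L.Formula (Fin mx ⊕ Fin my)}

lemma ExemplifiesSOP1'.exists_realize_treeFormula (h : ExemplifiesSOP1' φ M) (n : ℕ) :
    ∃ v : TreeNode n × Fin my ⊕ TreeNode n × Fin mx → M, (treeFormula φ n).Realize v := by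
  obtain ⟨a, hbranch, hinc⟩ := h
  choose e he using fun η : TreeNode n => hbranch (η.1.getD · false)
  refine ⟨Sum.elim (fun x => a x.1 x.2) (fun x => e x.1 x.2),
    realize_treeFormula.mpr ⟨fun ν η hνη => ?_, fun ν η hνη => hinc ν η hνη⟩⟩
  obtain ⟨hrestrict, htrue⟩ := restrict_getD_of_append_prefix hνη
  have hpos := (he η ν.1.length).mpr htrue
  rw [hrestrict] at hpos
  exact hpos

lemma isRankTree_of_realize_treeFormula {n : ℕ}
    {v : TreeNode n × Fin my ⊕ TreeNode n × Fin mx → M} (h : (treeFormula φ n).Realize v) :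
    IsRankTree φ ∅ ∅ n fun η j => v (.inl (.ofList η, j)) := by
  obtain ⟨hbranch, hinc⟩ := realize_treeFormula.mp h
  refine ⟨fun η hη => ⟨fun i => v (.inr (⟨η, hη.le⟩, i)), realizes_empty _, fun ν hνη => ?_⟩,
    fun _ _ => realizes_empty _, fun ν η hη hνη => ?_⟩
  · have hν : ν.length ≤ n := by
      have := hνη.length_le
      simp only [List.length_append, List.length_singleton] at this
      omega
    beta_reduce
    rw [TreeNode.ofList_of_length_le hν]
    exact hbranch ⟨ν, hν⟩ ⟨η, hη.le⟩ hνη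
  · have hν : ν.length ≤ n := ((List.prefix_append _ _).trans hνη).length_le.trans hη
    beta_reduce
    rw [TreeNode.ofList_of_length_le hν, TreeNode.ofList_of_length_le hη]
    exact hinc ⟨ν, hν⟩ ⟨η, hη⟩ hνη

lemma ExemplifiesSOP1'.rankGE {N : Type*} [L.Structure N] [N ⊨ L.completeTheory M]
    (h : ExemplifiesSOP1' φ N) (n : ℕ) : RankGE (M := M) φ n ∅ ∅ := by
  obtain ⟨v, hv⟩ := h.exists_realize_treeFormula n
  obtain ⟨w, hw⟩ := exists_realize_of_model_completeTheory (M := M) hv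
  exact rankGE_iff_exists_isRankTree.mpr ⟨_, isRankTree_of_realize_treeFormula hw⟩

end Transfer

section Compactness

variable {mx my : ℕ} {φ : L.Formula (Fin mx ⊕ Fin my)}

variable (φ) in
/-- The conditions of `ExemplifiesSOP1' φ` up to depth `n`, in the variables `(η, j)` for the
node `a_η` and `(ρ, i)` for a witness of the branch `ρ`. -/
def sop1'Formulas (n : ℕ) : Set (L.Formula ((List Bool × Fin my) ⊕ ((ℕ → Bool) × Fin mx))) :=
  {ψ | ∃ (ρ : ℕ → Bool) (k : ℕ), k < n ∧ ψ = (if ρ k then φ else φ.not).relabel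
      (Sum.elim (fun i => .inr (ρ, i)) (fun j => .inl (restrict ρ k, j)))} ∪
  {ψ | ∃ ν η : List Bool, ν ++ [false] <+: η ∧ η.length ≤ n ∧ ψ = (incompatFormula φ).relabel
      (Sum.elim (fun j => .inl (η, j)) (fun j => .inl (ν, j)))}

lemma sop1'Formulas_mono : Monotone (sop1'Formulas φ) := fun _ _ hmn =>
  Set.union_subset_union (fun _ ⟨ρ, k, hk, hψ⟩ => ⟨ρ, k, hk.trans_le hmn, hψ⟩)
    fun _ ⟨ν, η, hνη, hη, hψ⟩ => ⟨ν, η, hνη, hη.trans hmn, hψ⟩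

lemma forall_realize_sop1'Formulas {n : ℕ} {v : (List Bool × Fin my) ⊕ ((ℕ → Bool) × Fin mx) → M} :
    (∀ ψ ∈ sop1'Formulas φ n, ψ.Realize v) ↔
      (∀ ρ k, k < n → (φ.Realize (Sum.elim (fun i => v (.inr (ρ, i)))
        (fun j => v (.inl (restrict ρ k, j)))) ↔ ρ k = true)) ∧
      ∀ ν η, ν ++ [false] <+: η → η.length ≤ n → ¬ ∃ e : Fin mx → M,
        φ.Realize (Sum.elim e (fun j => v (.inl (η, j)))) ∧
          φ.Realize (Sum.elim e (fun j => v (.inl (ν, j)))) := by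
  have hbranch (ρ : ℕ → Bool) (k : ℕ) : ((if ρ k then φ else φ.not).relabel
      (Sum.elim (fun i => .inr (ρ, i)) (fun j => .inl (restrict ρ k, j)))).Realize v ↔
      (φ.Realize (Sum.elim (fun i => v (.inr (ρ, i))) (fun j => v (.inl (restrict ρ k, j)))) ↔
        ρ k = true) := by
    rw [Formula.realize_relabel, Sum.comp_elim]
    cases ρ k <;> simp [Function.comp_def]
  have hinc (ν η : List Bool) : ((incompatFormula φ).relabel
      (Sum.elim (fun j => .inl (η, j)) (fun j => .inl (ν, j)))).Realize v ↔ ¬ ∃ e : Fin mx → M,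
        φ.Realize (Sum.elim e (fun j => v (.inl (η, j)))) ∧
          φ.Realize (Sum.elim e (fun j => v (.inl (ν, j)))) := by
    rw [Formula.realize_relabel, Sum.comp_elim, realize_incompatFormula]
    rfl
  refine ⟨fun h => ⟨fun ρ k hk => (hbranch ρ k).mp (h _ (.inl ⟨ρ, k, hk, rfl⟩)),
    fun ν η hνη hη => (hinc ν η).mp (h _ (.inr ⟨ν, η, hνη, hη, rfl⟩))⟩, ?_⟩
  rintro ⟨h₁, h₂⟩ ψ (⟨ρ, k, hk, rfl⟩ | ⟨ν, η, hνη, hη, rfl⟩)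
  exacts [(hbranch ρ k).mpr (h₁ ρ k hk), (hinc ν η).mpr (h₂ ν η hνη hη)]

lemma exists_exemplifiesSOP1'_of_forall_rankGE (𝔠 : Type) [L.Structure 𝔠] [Nonempty 𝔠]
    (h : ∀ n, RankGE (M := 𝔠) φ n ∅ ∅) :
    ∃ N : Theory.ModelType.{0, 0, 0} (L.completeTheory 𝔠), ExemplifiesSOP1' φ N := by
  have happrox (n : ℕ) : ∃ v : _ → 𝔠, ∀ ψ ∈ sop1'Formulas φ n, ψ.Realize v := by
    obtain ⟨c, hc⟩ := rankGE_iff_exists_isRankTree.mp (h (n + 1))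
    choose e he using fun ρ => hc.exists_signed_branch (restrict_length ρ n)
    refine ⟨Sum.elim (fun x => c x.1 x.2) (fun x => e x.1 x.2), forall_realize_sop1'Formulas.mpr
      ⟨fun ρ k hk => (he ρ).2 _ _ ?_, fun ν η hνη hη => hc.2.2 ν η (by omega) hνη⟩⟩
    exact restrict_succ ρ k ▸ restrict_prefix_restrict ρ hk
  obtain ⟨N, v, hv⟩ := exists_model_completeTheory_realize sop1'Formulas_mono 𝔠 happrox
  refine ⟨N, fun η j => v (.inl (η, j)), fun ρ => ⟨fun i => v (.inr (ρ, i)), fun k => ?_⟩,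
    fun ν η hνη => ?_⟩
  · exact (forall_realize_sop1'Formulas.mp (hv (k + 1))).1 ρ k (lt_add_one k)
  · exact (forall_realize_sop1'Formulas.mp (hv η.length)).2 ν η hνη le_rfl

theorem exists_exemplifiesSOP1'_iff_forall_rankGE (𝔠 : Type) [L.Structure 𝔠] [Nonempty 𝔠] :
    (∃ N : Theory.ModelType.{0, 0, 0} (L.completeTheory 𝔠), ExemplifiesSOP1' φ N) ↔
      ∀ n, RankGE (M := 𝔠) φ n ∅ ∅ :=
  ⟨fun ⟨_, hN⟩ => hN.rankGE, exists_exemplifiesSOP1'_of_forall_rankGE 𝔠⟩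

end Compactness

/-- For a complete first-order theory `T` (here the complete theory of a
monster model `𝔠`) the following are equivalent:
(i) `T` does not have SOP₁ (no formula exemplifies SOP₁ in any model of `T`);
(ii) `T` does not have SOP₁';
(iii) `rk¹_φ({x̄=x̄},{ȳ=ȳ})` is finite for every formula `φ(x̄,ȳ)` (the trivial types are
represented by `∅`). -/
theorem NSOP1_iff_NSOP1'_iff_rank_finite (𝔠 : Type) [L.Structure 𝔠] [Nonempty 𝔠] :
    ((¬ ∃ (N : Theory.ModelType.{0, 0, 0} (L.completeTheory 𝔠)) (mx my : ℕ)
        (φ : L.Formula (Fin mx ⊕ Fin my)), ExemplifiesSOP1 φ N) ↔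
      (¬ ∃ (N : Theory.ModelType.{0, 0, 0} (L.completeTheory 𝔠)) (mx my : ℕ)
        (φ : L.Formula (Fin mx ⊕ Fin my)), ExemplifiesSOP1' φ N)) ∧
    ((¬ ∃ (N : Theory.ModelType.{0, 0, 0} (L.completeTheory 𝔠)) (mx my : ℕ)
        (φ : L.Formula (Fin mx ⊕ Fin my)), ExemplifiesSOP1' φ N) ↔
      (∀ (mx my : ℕ) (φ : L.Formula (Fin mx ⊕ Fin my)),
        ∃ n : ℕ, ¬ RankGE (M := 𝔠) φ n ∅ ∅)) := by
  refine ⟨by simp only [exemplifiesSOP1_iff_exemplifiesSOP1'], ?_⟩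
  simp only [← not_forall, ← exists_exemplifiesSOP1'_iff_forall_rankGE]
  exact ⟨fun h mx my φ ⟨N, hN⟩ => h ⟨N, mx, my, φ, hN⟩,
    fun h ⟨N, mx, my, φ, hN⟩ => h mx my φ ⟨N, hN⟩⟩

end SopPaper
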